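/- Let y : [0,∞) → ℝ^N satisfy y'(t) = f(y(t)), where f : ℝ^N → ℝ^N is differentiable and there are positive constants C₁, C₂, δ such that for every t ∈ [0,∞) and x ∈ ℝ^N with ‖x − y(t)‖₂ ≤ δ one has ‖f(x)‖₂ ≤ C₁ and ‖∇f(x)‖_op ≤ C₂. Fix T ∈ [0,∞) and ε > 0, let 0 < η ≤ (min{ε, δ}/C₁)·e^{−C₂T}, and define the forward Euler iterates y₀ = y(0) and y_{k+1} = y_k + η f(y_k) for k = 0,…,⌊T/η⌋−1. Then ‖y(T) − y_{⌊T/η⌋}‖₂ ≤ ε. -/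

import Mathlib

noncomputable section

/-- The Euclidean (ℓ²) norm of a vector in ℝⁿ. -/
def norm2 {n : ℕ} (v : Fin n → ℝ) : ℝ := Real.sqrt (∑ i, v i ^ 2)

/-- The ℓ¹ norm of a vector in ℝⁿ. -/
def norm1 {n : ℕ} (v : Fin n → ℝ) : ℝ := ∑ i, |v i|

/-- The sup (ℓ^∞) norm of a vector in ℝⁿ. -/
def normInf {n : ℕ} (v : Fin n → ℝ) : ℝ := ⨆ i, |v i|

/-- The ℓʳ (quasi-)norm ‖v‖_r = (∑ |v i|^r)^(1/r). -/
def normr {n : ℕ} (r : ℝ) (v : Fin n → ℝ) : ℝ := (∑ i, |v i| ^ r) ^ (1 / r)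

/-- The smallest singular value of `A`, via `σ_min(A) = inf {‖Aᵀ z‖₂ : ‖z‖₂ = 1}`. -/
def sigmaMin {m N : ℕ} (A : Matrix (Fin m) (Fin N) ℝ) : ℝ :=
  sInf {c : ℝ | ∃ z : Fin m → ℝ, norm2 z = 1 ∧ c = norm2 (A.transpose.mulVec z)}

/-- The entropy H(z) = −∑ |z i| ln |z i| (with the convention 0 · ln 0 = 0,
which holds automatically since `Real.log 0 = 0`). -/
def Hent {n : ℕ} (z : Fin n → ℝ) : ℝ := -∑ i, |z i| * Real.log |z i|

/-- The set 𝒰(A,y) of basis-pursuit minimizers: minimizers of ‖·‖₁ subject to Az = y. -/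
def BPset {m N : ℕ} (A : Matrix (Fin m) (Fin N) ℝ) (y : Fin m → ℝ) : Set (Fin N → ℝ) :=
  {z | A.mulVec z = y ∧ ∀ w : Fin N → ℝ, A.mulVec w = y → norm1 z ≤ norm1 w}

/-- The basis-pursuit minimum value R(A,y) = min {‖z‖₁ : Az = y}. -/
def Rmin {m N : ℕ} (A : Matrix (Fin m) (Fin N) ℝ) (y : Fin m → ℝ) : ℝ :=
  sInf (norm1 '' {z : Fin N → ℝ | A.mulVec z = y})

/-- The function h_p: h₂(t) = 2 sinh t, and for p > 2,
h_p(t) = (1−t)^{−p/(p−2)} − (1+t)^{−p/(p−2)}. -/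
def hfun (p t : ℝ) : ℝ :=
  if p = 2 then 2 * Real.sinh t
  else (1 - t) ^ (-(p / (p - 2))) - (1 + t) ^ (-(p / (p - 2)))

/-- The natural domain of h_p: all of ℝ when p = 2, and (−1,1) when p > 2. -/
def hDomain (p : ℝ) : Set ℝ := if p = 2 then Set.univ else Set.Ioo (-1) 1

/-- The inverse h_p^{-1} : ℝ → ℝ of h_p (h_p is a strictly increasing bijection
from its domain onto ℝ). -/
def hInv (p u : ℝ) : ℝ := Function.invFunOn (hfun p) (hDomain p) u

/-- q_p(u) = ∫₀ᵘ h_p^{−1}(v) dv. -/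
def qfun (p u : ℝ) : ℝ := ∫ v in (0:ℝ)..u, hInv p v

/-- Q_p(z) = α^p ∑ q_p(z i / α^p). -/
def Qfun {n : ℕ} (p α : ℝ) (z : Fin n → ℝ) : ℝ := α ^ p * ∑ i, qfun p (z i / α ^ p)

/-- g_p: g₂(u) = |u| ln(|u|/e) (with g₂(0) = 0), and for p > 2,
g_p(u) = |u| − (p/2)|u|^{2/p}. -/
def gfun (p u : ℝ) : ℝ :=
  if p = 2 then (if u = 0 then 0 else |u| * Real.log (|u| / Real.exp 1))
  else |u| - p / 2 * |u| ^ (2 / p)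

/-- G_p(z) = α^p ∑ g_p(z i / α^p). -/
def Gfun {n : ℕ} (p α : ℝ) (z : Fin n → ℝ) : ℝ := α ^ p * ∑ i, gfun p (z i / α ^ p)

/-- The predictor ψ_θ = θ₊^p − θ₋^p (componentwise powers), for a parameter vector
θ = (θ₊, θ₋) ∈ ℝ^{2N}. -/
def psiOf {N : ℕ} (p : ℝ) (θ : EuclideanSpace ℝ (Fin N ⊕ Fin N)) : Fin N → ℝ :=
  fun i => θ (Sum.inl i) ^ p - θ (Sum.inr i) ^ p

/-- The squared loss L(θ) = (1/2)‖A ψ_θ − y‖₂². -/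
def lossFun {m N : ℕ} (A : Matrix (Fin m) (Fin N) ℝ) (y : Fin m → ℝ) (p : ℝ)
    (θ : EuclideanSpace ℝ (Fin N ⊕ Fin N)) : ℝ :=
  (1 / 2) * ∑ j, (A.mulVec (psiOf p θ) j - y j) ^ 2

end

/-!
Within distance `δ` of the exact solution, `f` is bounded by `C₁` and, by the mean value
theorem, `C₂`-Lipschitz on each ball `closedBall (y s) δ`. Hence the solution is `C₁`-Lipschitz
and one exact step differs from one Euler step by at most `C₁C₂η²`. An Euler step started within
`δ` of the solution therefore multiplies the error by at most `1 + ηC₂` and adds `C₁C₂η²`, so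
after `k` steps the error is at most `C₁η((1 + ηC₂)ᵏ - 1) ≤ C₁η·e^{C₂T} ≤ min ε δ`. The bound
`δ` keeps the iterates inside the tube, which is what lets the induction continue; the last
partial step `T - ⌊T/η⌋η < η` costs another `C₁η`, absorbed by the same estimate.
-/

open Set

theorem sub_natFloor_div_mul_mem_Ico {a b : ℝ} (ha : 0 ≤ a) (hb : 0 < b) :
    a - ⌊a / b⌋₊ * b ∈ Ico 0 b := by
  have hcast : ((⌊a / b⌋₊ : ℕ) : ℝ) = ⌊a / b⌋ := by
    exact_mod_cast Int.natCast_floor_eq_floor (div_nonneg ha hb.le)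
  rw [hcast]
  exact ⟨Int.sub_floor_div_mul_nonneg a hb, Int.sub_floor_div_mul_lt a hb⟩

theorem Real.one_add_pow_le_exp_mul {x : ℝ} (hx : -1 ≤ x) (n : ℕ) :
    (1 + x) ^ n ≤ Real.exp (n * x) := by
  rw [Real.exp_nat_mul]
  exact pow_le_pow_left₀ (by linarith) (by linarith [Real.add_one_le_exp x]) n

theorem le_mul_pow_sub_one_of_le_mul_add {e : ℕ → ℝ} {a c : ℝ} {K : ℕ} (ha : 0 ≤ a)
    (h0 : e 0 ≤ 0) (hstep : ∀ k < K, e k ≤ c * (a ^ k - 1) → e (k + 1) ≤ a * e k + (a - 1) * c) :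
    ∀ k ≤ K, e k ≤ c * (a ^ k - 1) := by
  intro k
  induction k with
  | zero => simpa using h0
  | succ k ih =>
    intro hk
    have ih := ih (Nat.le_of_succ_le hk)
    calc e (k + 1) ≤ a * e k + (a - 1) * c := hstep k hk ih
      _ ≤ a * (c * (a ^ k - 1)) + (a - 1) * c := by gcongr
      _ = c * (a ^ (k + 1) - 1) := by ring

section

variable {E : Type*} [NormedAddCommGroup E] [NormedSpace ℝ E]

theorem norm_sub_le_mul_of_hasDerivWithinAt_Ici {y y' : ℝ → E} {C s t : ℝ}
    (hy : ∀ u, 0 ≤ u → HasDerivWithinAt y (y' u) (Ici 0) u) (hC : ∀ u, 0 ≤ u → ‖y' u‖ ≤ C)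
    (hs : 0 ≤ s) (hst : s ≤ t) : ‖y t - y s‖ ≤ C * (t - s) :=
  norm_image_sub_le_of_norm_deriv_le_segment'
    (fun u hu => (hy u (hs.trans hu.1)).mono fun _ hv => hs.trans hv.1)
    (fun u hu => hC u (hs.trans hu.1)) t (right_mem_Icc.2 hst)

theorem norm_sub_sub_smul_le_of_hasDerivWithinAt {y y' : ℝ → E} {C s t : ℝ} (hst : s ≤ t)
    (hy : ∀ u ∈ Icc s t, HasDerivWithinAt y (y' u) (Icc s t) u)
    (hC : ∀ u ∈ Ico s t, ‖y' u - y' s‖ ≤ C) :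
    ‖y t - y s - (t - s) • y' s‖ ≤ C * (t - s) := by
  have hg : ∀ u ∈ Icc s t, HasDerivWithinAt (fun u => y u - (u - s) • y' s) (y' u - y' s)
      (Icc s t) u := fun u hu =>
    ((hy u hu).sub (((hasDerivWithinAt_id u _).sub_const s).smul_const (y' s))).congr_deriv
      (by rw [one_smul])
  have h := norm_image_sub_le_of_norm_deriv_le_segment' hg hC t (right_mem_Icc.2 hst)
  rwa [sub_self, zero_smul, sub_zero, sub_right_comm] at h

theorem norm_sub_euler_step_le {f : E → E} {y : ℝ → E} {C₁ C₂ δ s η : ℝ} {x : E}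
    (hf : Differentiable ℝ f)
    (hy : ∀ t, 0 ≤ t → HasDerivWithinAt y (f (y t)) (Ici 0) t)
    (hbound : ∀ t, 0 ≤ t → ∀ x, ‖x - y t‖ ≤ δ → ‖f x‖ ≤ C₁ ∧ ‖fderiv ℝ f x‖ ≤ C₂)
    (hs : 0 ≤ s) (hη : 0 ≤ η) (hηδ : C₁ * η ≤ δ) (hx : ‖x - y s‖ ≤ δ) :
    ‖y (s + η) - (x + η • f x)‖ ≤ (1 + η * C₂) * ‖y s - x‖ + η * C₂ * (C₁ * η) := by
  have hδ : 0 ≤ δ := (norm_nonneg _).trans hx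
  have hys : ‖y s - y s‖ ≤ δ := by simpa using hδ
  have hC₁ : 0 ≤ C₁ := (norm_nonneg _).trans (hbound s hs _ hys).1
  have hC₂ : 0 ≤ C₂ := (norm_nonneg _).trans (hbound s hs _ hys).2
  have hlip : ∀ x₁, ‖x₁ - y s‖ ≤ δ → ‖f (y s) - f x₁‖ ≤ C₂ * ‖y s - x₁‖ := fun x₁ h₁ =>
    (convex_closedBall (y s) δ).norm_image_sub_le_of_norm_fderiv_le (fun z _ => hf z)
      (fun z hz => (hbound s hs z (mem_closedBall_iff_norm.1 hz)).2)
      (mem_closedBall_iff_norm.2 h₁) (mem_closedBall_iff_norm.2 hys)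
  have hpath : ∀ t ∈ Icc s (s + η), ‖y t - y s‖ ≤ C₁ * η := fun t ht =>
    (norm_sub_le_mul_of_hasDerivWithinAt_Ici hy
      (fun u hu => (hbound u hu _ (by simpa using hδ)).1) hs ht.1).trans
      (by gcongr; linarith [ht.2])
  have htrunc : ‖y (s + η) - y s - η • f (y s)‖ ≤ C₂ * (C₁ * η) * η := by
    simpa using norm_sub_sub_smul_le_of_hasDerivWithinAt (by linarith : s ≤ s + η)
      (fun u hu => (hy u (hs.trans hu.1)).mono fun _ hv => hs.trans hv.1)
      fun u hu => by
        rw [norm_sub_rev]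
        exact (hlip _ ((hpath u (Ico_subset_Icc_self hu)).trans hηδ)).trans
          (by rw [norm_sub_rev]; gcongr; exact hpath u (Ico_subset_Icc_self hu))
  calc ‖y (s + η) - (x + η • f x)‖
      = ‖(y (s + η) - y s - η • f (y s)) + (y s - x) + η • (f (y s) - f x)‖ := by
        rw [smul_sub]; congr 1; abel
    _ ≤ ‖y (s + η) - y s - η • f (y s)‖ + ‖y s - x‖ + η * ‖f (y s) - f x‖ := by
        refine norm_add₃_le.trans_eq ?_
        rw [norm_smul, Real.norm_of_nonneg hη]
    _ ≤ C₂ * (C₁ * η) * η + ‖y s - x‖ + η * (C₂ * ‖y s - x‖) := by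
        gcongr; exact hlip x hx
    _ = (1 + η * C₂) * ‖y s - x‖ + η * C₂ * (C₁ * η) := by ring

end

theorem stmt19_general (N : ℕ)
    (f : EuclideanSpace ℝ (Fin N) → EuclideanSpace ℝ (Fin N))
    (hf : Differentiable ℝ f)
    (y : ℝ → EuclideanSpace ℝ (Fin N))
    (hy : ∀ t : ℝ, 0 ≤ t → HasDerivWithinAt y (f (y t)) (Set.Ici 0) t)
    (C₁ C₂ δ : ℝ) (hC₁ : 0 < C₁) (hC₂ : 0 < C₂) (hδ : 0 < δ)
    (hbound : ∀ t : ℝ, 0 ≤ t → ∀ x : EuclideanSpace ℝ (Fin N), ‖x - y t‖ ≤ δ →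
      ‖f x‖ ≤ C₁ ∧ ‖fderiv ℝ f x‖ ≤ C₂)
    (T : ℝ) (hT : 0 ≤ T) (ε : ℝ)
    (η : ℝ) (hη : 0 < η) (hη2 : η ≤ min ε δ / C₁ * Real.exp (-C₂ * T))
    (yk : ℕ → EuclideanSpace ℝ (Fin N))
    (hyk0 : yk 0 = y 0)
    (hykstep : ∀ k : ℕ, yk (k + 1) = yk k + η • f (yk k)) :
    ‖y T - yk ⌊T / η⌋₊‖ ≤ ε := by
  set K := ⌊T / η⌋₊
  set a := 1 + η * C₂
  obtain ⟨hKT, hTK⟩ := sub_natFloor_div_mul_mem_Ico hT hη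
  have ha : 1 ≤ a := by simp only [a]; nlinarith
  have hgrowth : a ^ K ≤ Real.exp (C₂ * T) :=
    (Real.one_add_pow_le_exp_mul (by nlinarith) K).trans (Real.exp_le_exp.2 (by nlinarith))
  have hsmall : C₁ * η * a ^ K ≤ min ε δ :=
    calc C₁ * η * a ^ K ≤ C₁ * η * Real.exp (C₂ * T) := by gcongr
      _ ≤ C₁ * (min ε δ / C₁ * Real.exp (-C₂ * T)) * Real.exp (C₂ * T) := by gcongr
      _ = min ε δ := by rw [neg_mul, Real.exp_neg]; field_simp
  have hstep : C₁ * η ≤ C₁ * η * a ^ K := le_mul_of_one_le_right (by positivity) (one_le_pow₀ ha)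
  have herr : ∀ k ≤ K, ‖y (k * η) - yk k‖ ≤ C₁ * η * (a ^ k - 1) := by
    refine le_mul_pow_sub_one_of_le_mul_add (by positivity) (by simp [hyk0]) fun k hk ih => ?_
    have hpow : C₁ * η * a ^ k ≤ C₁ * η * a ^ K := by gcongr
    rw [Nat.cast_succ, add_one_mul, hykstep]
    refine (norm_sub_euler_step_le hf hy hbound (by positivity) hη.le ?_ ?_).trans_eq (by ring)
    · linarith [min_le_right ε δ]
    · rw [norm_sub_rev]; linarith [min_le_right ε δ, mul_pos hC₁ hη]
  have hlast : ‖y T - y (K * η)‖ ≤ C₁ * η :=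
    (norm_sub_le_mul_of_hasDerivWithinAt_Ici hy
      (fun t ht => (hbound t ht _ (by simpa using hδ.le)).1) (by positivity) (by linarith)).trans
      (by gcongr)
  calc ‖y T - yk K‖ ≤ ‖y T - y (K * η)‖ + ‖y (K * η) - yk K‖ :=
        norm_sub_le_norm_sub_add_norm_sub _ _ _
    _ ≤ C₁ * η + C₁ * η * (a ^ K - 1) := add_le_add hlast (herr K le_rfl)
    _ = C₁ * η * a ^ K := by ring
    _ ≤ ε := hsmall.trans (min_le_left _ _)

/-- Theorem `euler_method`: global truncation error of the forward
Euler method: if y' = f(y) on [0,∞), ‖f‖₂ ≤ C₁ and ‖∇f‖_op ≤ C₂ within distance δ of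
the solution path, T ≥ 0, ε > 0 and 0 < η ≤ (min{ε,δ}/C₁)e^{−C₂T}, then the Euler
iterates y₀ = y(0), y_{k+1} = y_k + η f(y_k) satisfy ‖y(T) − y_{⌊T/η⌋}‖₂ ≤ ε. -/
theorem stmt19 (N : ℕ)
    (f : EuclideanSpace ℝ (Fin N) → EuclideanSpace ℝ (Fin N))
    (hf : Differentiable ℝ f)
    (y : ℝ → EuclideanSpace ℝ (Fin N))
    (hy : ∀ t : ℝ, 0 ≤ t → HasDerivWithinAt y (f (y t)) (Set.Ici 0) t)
    (C₁ C₂ δ : ℝ) (hC₁ : 0 < C₁) (hC₂ : 0 < C₂) (hδ : 0 < δ)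
    (hbound : ∀ t : ℝ, 0 ≤ t → ∀ x : EuclideanSpace ℝ (Fin N), ‖x - y t‖ ≤ δ →
      ‖f x‖ ≤ C₁ ∧ ‖fderiv ℝ f x‖ ≤ C₂)
    (T : ℝ) (hT : 0 ≤ T) (ε : ℝ) (hε : 0 < ε)
    (η : ℝ) (hη : 0 < η) (hη2 : η ≤ min ε δ / C₁ * Real.exp (-C₂ * T))
    (yk : ℕ → EuclideanSpace ℝ (Fin N))
    (hyk0 : yk 0 = y 0)
    (hykstep : ∀ k : ℕ, yk (k + 1) = yk k + η • f (yk k)) :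
    ‖y T - yk ⌊T / η⌋₊‖ ≤ ε :=
  stmt19_general N f hf y hy C₁ C₂ δ hC₁ hC₂ hδ hbound T hT ε η hη hη2 yk hyk0 hykstep
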